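/- Let (τ, α) be a plane tree with n edges on H (|H| = 2n, n ≥ 1) rooted at t ∈ H with root-to-leaves orientation (I, O), and let (π, α') be a mobile on H' = H ∪ {i,o} coherently attached to this tree. Define σ' = τ'∘π_{|I'} (with π_{|I'} viewed as a permutation of H' fixing O'), σ = σ'_{|H}, and r = σ'(i). Then: (a) r ∈ H and the permutations σ and α generate a subgroup acting transitively on H, so (σ,α) is a combinatorial map; (b) the orientation (I,O) is left-connected for (σ,α) rooted at r: for every h ∈ H there exists q > 0 with β^q(h) = r, where β(h) = σ(h) if h ∈ O and β(h) = σ(α(h)) if h ∈ I; (c) π_{|I'} = σ'_{|I'} and (π⁻¹)_{|O'} = ((i,o)∘σ'∘α')_{|O'}, so that the unfolding of ((σ,α),(I,O)) returns the given tree and mobile. -/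

import Mathlib

/-- First-return restriction of `f` to `S`, viewed as a map on the whole set
(acting as the identity outside `S`). -/
noncomputable def restrictFun {X : Type*} (f : X → X) (S : Set X) (x : X) : X := by
  classical
  exact if hx : x ∈ S ∧ ∃ k : ℕ, 0 < k ∧ f^[k] x ∈ S then f^[Nat.find hx.2] x else x

/-- `(σ,α)` is a combinatorial map. -/
def IsCombMap {X : Type*} (σ α : Equiv.Perm X) : Prop :=
  (∀ h, α h ≠ h) ∧ (∀ h, α (α h) = h) ∧
    ∀ x y : X, ∃ g ∈ Subgroup.closure ({σ, α} : Set (Equiv.Perm X)), g x = y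

/-- The backward function of an orientation with ingoing set `I`. -/
noncomputable def backward {X : Type*} (σ α : Equiv.Perm X) (I : Set X) (h : X) : X := by
  classical
  exact if h ∈ I then σ (α h) else σ h

/-- The number of orbits of `f` on `S` (forward orbits inside `S`). -/
noncomputable def numOrbitsOn {X : Type*} (f : X → X) (S : Set X) : ℕ :=
  ((fun x => {y | y ∈ S ∧ ∃ k : ℕ, f^[k] x = y}) '' S).ncard

/-- `H' = H ⊕ Bool`, where `i = Sum.inr true` and `o = Sum.inr false` are the two new
half-edges. The extended edge-involution `α'` acts as `α` on `H` and swaps `i` and `o`. -/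
def alphaExt {H : Type*} (α : Equiv.Perm H) : Equiv.Perm (H ⊕ Bool) :=
  Equiv.sumCongr α (Equiv.swap true false)

/-- The extended vertex-permutation `σ'` of the unfolding construction: `σ' i = r`,
`σ' (σ⁻¹ r) = i`, `σ' o = o` and `σ' = σ` elsewhere. -/
noncomputable def sigmaExt {H : Type*} (σ : Equiv.Perm H) (r : H) :
    Equiv.Perm (H ⊕ Bool) := by
  classical
  exact Equiv.sumCongr σ (1 : Equiv.Perm Bool) *
    Equiv.swap (Sum.inr true) (Sum.inl (σ⁻¹ r))

/-!
Since the orbits of `π` stay inside `I'` or `O'`, `π_{|I'}` is `π` on `I'` and the identity on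
`O'`. Hence `σ` agrees with `τ` on `O`, except that it sends `τ⁻¹ t` to `r`. In the tree the
backward function of `(τ, α)` leads every half-edge to `τ⁻¹ t`; the backward function of
`(σ, α)` differs from it only by jumping to `r`, so it reaches `r` from everywhere, which gives
left-connectedness and then transitivity. Every cycle of `τ'` meets `I'` at most once, so the
first return of `τ'` to `I'` is trivial and `σ'_{|I'} = π_{|I'}`. Finally, the coherence
condition evaluated at `π (α' x)` returns `π⁻¹ x` for `x ∈ O'`.
-/

open Function Equiv

section RestrictFun

variable {X : Type*} {f : X → X} {S : Set X} {x : X}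

theorem restrictFun_of_notMem (hx : x ∉ S) : restrictFun f S x = x :=
  dif_neg fun h => hx h.1

theorem exists_restrictFun_eq_iterate (f : X → X) (S : Set X) (x : X) :
    ∃ m, restrictFun f S x = f^[m] x := by
  unfold restrictFun
  split_ifs
  exacts [⟨_, rfl⟩, ⟨0, rfl⟩]

theorem restrictFun_mem (hx : x ∈ S) (hret : ∃ k, 0 < k ∧ f^[k] x ∈ S) :
    restrictFun f S x ∈ S := by
  classical
  have h : x ∈ S ∧ ∃ k, 0 < k ∧ f^[k] x ∈ S := ⟨hx, hret⟩
  rw [restrictFun, dif_pos h]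
  exact (Nat.find_spec h.2).2

theorem restrictFun_eq_iterate (hx : x ∈ S) {m : ℕ} (hm : 0 < m) (hmS : f^[m] x ∈ S)
    (hmin : ∀ j, 0 < j → j < m → f^[j] x ∉ S) : restrictFun f S x = f^[m] x := by
  classical
  have h : x ∈ S ∧ ∃ k, 0 < k ∧ f^[k] x ∈ S := ⟨hx, m, hm, hmS⟩
  rw [restrictFun, dif_pos h,
    (Nat.find_eq_iff h.2).2 ⟨⟨hm, hmS⟩, fun j hj hjS => hmin j hjS.1 hj hjS.2⟩]

theorem restrictFun_eq_apply (hx : x ∈ S) (hfx : f x ∈ S) : restrictFun f S x = f x :=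
  restrictFun_eq_iterate hx one_pos hfx fun _ h0 h1 => absurd h1 (by omega)

theorem restrictFun_eq_apply_apply (hx : x ∈ S) (hfx : f x ∉ S) (hffx : f (f x) ∈ S) :
    restrictFun f S x = f (f x) :=
  restrictFun_eq_iterate (m := 2) hx two_pos hffx fun j h0 h2 => by
    obtain rfl : j = 1 := by omega
    exact hfx

theorem restrictFun_eq_self_of_iterate_mem (hx : x ∈ S) (hret : ∃ k, 0 < k ∧ f^[k] x ∈ S)
    (hS : ∀ m, f^[m] x ∈ S → f^[m] x = x) : restrictFun f S x = x := by
  obtain ⟨m, hm⟩ := exists_restrictFun_eq_iterate f S x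
  rw [hm]
  exact hS m (hm ▸ restrictFun_mem hx hret)

theorem iterate_comp_apply_of_notMem {u v : X → X} (hv : ∀ z ∉ S, v z = z) {j : ℕ} (hj : 0 < j)
    (hout : ∀ i, 0 < i → i < j → u^[i] (v x) ∉ S) : (u ∘ v)^[j] x = u^[j] (v x) := by
  induction j with
  | zero => omega
  | succ j ih =>
    rcases Nat.eq_zero_or_pos j with rfl | hj
    · rfl
    · rw [iterate_succ_apply', ih hj fun i h0 h1 => hout i h0 (by omega), iterate_succ_apply',
        comp_apply, hv _ (hout j hj (by omega))]

theorem restrictFun_comp_of_eqOn_compl {u v : X → X} (hv : ∀ z ∉ S, v z = z) (hx : x ∈ S)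
    (hvx : v x ∈ S) (hret : ∃ m, 0 < m ∧ u^[m] (v x) ∈ S) :
    restrictFun (u ∘ v) S x = restrictFun u S (v x) := by
  classical
  obtain ⟨hm, hmS⟩ := Nat.find_spec hret
  have hmin : ∀ j, 0 < j → j < Nat.find hret → u^[j] (v x) ∉ S :=
    fun j hj hjm hjS => Nat.find_min hret hjm ⟨hj, hjS⟩
  have hcomp : ∀ j, 0 < j → j ≤ Nat.find hret → (u ∘ v)^[j] x = u^[j] (v x) :=
    fun j hj hjm => iterate_comp_apply_of_notMem hv hj fun i hi hij => hmin i hi (by omega)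
  rw [restrictFun_eq_iterate hvx hm hmS hmin, ← hcomp _ hm le_rfl]
  exact restrictFun_eq_iterate hx hm (hcomp _ hm le_rfl ▸ hmS)
    fun j hj hjm => hcomp j hj hjm.le ▸ hmin j hj hjm

theorem Equiv.Perm.exists_pos_iterate_mem [Finite X] (f : Perm X) (hx : x ∈ S) :
    ∃ m, 0 < m ∧ (⇑f)^[m] x ∈ S :=
  ⟨orderOf f, orderOf_pos f, by rwa [Perm.iterate_eq_pow, pow_orderOf_eq_one]⟩

end RestrictFun

section Mobile

variable {X : Type*} [Finite X] {S : Set X} {π p : Perm X}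

theorem restrictFun_eq_restrictFun_mul (σ : Perm X) (hσ : ∀ y ∈ S, restrictFun σ S y = y)
    (hπ : ∀ x ∈ S, π x ∈ S) (hp : ⇑p = restrictFun π S) (x : X) :
    restrictFun π S x = restrictFun ⇑(σ * p) S x := by
  by_cases hx : x ∈ S
  · have hpx : p x = π x := by rw [hp, restrictFun_eq_apply hx (hπ x hx)]
    have hp_compl : ∀ z ∉ S, p z = z := fun z hz => by rw [hp, restrictFun_of_notMem hz]
    rw [restrictFun_eq_apply hx (hπ x hx), Perm.coe_mul,
      restrictFun_comp_of_eqOn_compl hp_compl hx (hpx ▸ hπ x hx)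
        (σ.exists_pos_iterate_mem (hpx ▸ hπ x hx)), hpx, hσ _ (hπ x hx)]
  · rw [restrictFun_of_notMem hx, restrictFun_of_notMem hx]

/-- Starting from `π (α x)` with `x ∉ S`, `(π α)⁻¹` returns to `S` in exactly two steps, landing
on `α (π⁻¹ x)`. -/
theorem restrictFun_inv_compl_eq {α : Perm X} (ρ σ : Perm X) (hα : Involutive α)
    (hαS : ∀ x, α x ∈ S ↔ x ∉ S) (hπ : ∀ x, π x ∈ S ↔ x ∈ S) (hp : ⇑p = restrictFun π S)
    (hcoh : ∀ h ∈ S, restrictFun ⇑(π * α)⁻¹ S h = α (restrictFun ⇑(ρ * σ * α) Sᶜ (α h)))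
    (x : X) : restrictFun ⇑π⁻¹ Sᶜ x = restrictFun ⇑(ρ * (σ * p) * α) Sᶜ x := by
  by_cases hx : x ∈ Sᶜ
  · have hαx : α x ∈ S := (hαS x).2 hx
    have hπαx : π (α x) ∈ S := (hπ _).2 hαx
    have hπinv : π⁻¹ x ∈ Sᶜ := fun h => hx (by simpa using (hπ _).2 h)
    have hinv_apply : ∀ z, (π * α)⁻¹ z = α (π⁻¹ z) := fun z => by
      rw [mul_inv_rev, Perm.mul_apply, Perm.inv_eq_iff_eq, hα]
    have hstep : (π * α)⁻¹ (π (α x)) = x := by simp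
    have hcoh_x : α (π⁻¹ x) = α (restrictFun ⇑(ρ * σ * α) Sᶜ (α (π (α x)))) := by
      rw [← hcoh _ hπαx, restrictFun_eq_apply_apply hπαx (by rwa [hstep])
        (by rw [hstep, hinv_apply]; exact (hαS _).2 hπinv), hstep, hinv_apply]
    have hconj : ⇑(ρ * (σ * p) * α) = ⇑(ρ * σ * α) ∘ (fun z => α (p (α z))) := by
      funext z; simp [hα _]
    have hp_compl : ∀ z ∉ Sᶜ, α (p (α z)) = z := fun z hz => by
      rw [hp, restrictFun_of_notMem fun h => (hαS z).1 h (Set.notMem_compl_iff.1 hz), hα z]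
    have hpαx : α (p (α x)) = α (π (α x)) := by rw [hp, restrictFun_eq_apply hαx hπαx]
    have hpαx_mem : α (p (α x)) ∈ Sᶜ := by
      rw [hpαx]; exact fun h => (hαS _).1 h hπαx
    rw [restrictFun_eq_apply hx hπinv, hconj, restrictFun_comp_of_eqOn_compl hp_compl hx
      hpαx_mem ((ρ * σ * α).exists_pos_iterate_mem hpαx_mem), hpαx]
    exact α.injective hcoh_x
  · rw [restrictFun_of_notMem hx, restrictFun_of_notMem hx]

end Mobile

section Connectivity

variable {X : Type*}

theorem apply_mem_iff_of_mem_closure {s : Set (Perm X)} {A : Set X}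
    (hs : ∀ f ∈ s, ∀ x, f x ∈ A ↔ x ∈ A) {g : Perm X} (hg : g ∈ Subgroup.closure s) (x : X) :
    g x ∈ A ↔ x ∈ A := by
  induction hg using Subgroup.closure_induction generalizing x with
  | mem f hf => exact hs f hf x
  | one => rfl
  | mul f g _ _ hf hg => exact (hf (g x)).trans (hg x)
  | inv f _ hf => simpa using (hf (f⁻¹ x)).symm

theorem eq_univ_of_closure_invariant {s : Set (Perm X)} {A : Set X}
    (htrans : ∀ x y : X, ∃ g ∈ Subgroup.closure s, g x = y)
    (hs : ∀ f ∈ s, ∀ x, f x ∈ A ↔ x ∈ A) {a : X} (ha : a ∈ A) : A = Set.univ := by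
  refine Set.eq_univ_of_forall fun y => ?_
  obtain ⟨g, hg, rfl⟩ := htrans a y
  exact (apply_mem_iff_of_mem_closure hs hg a).2 ha

theorem exists_mem_closure_apply_eq_iterate_backward (σ α : Perm X) (I : Set X) (q : ℕ)
    (x : X) : ∃ g ∈ Subgroup.closure ({σ, α} : Set (Perm X)), g x = (backward σ α I)^[q] x := by
  have hσ : σ ∈ Subgroup.closure ({σ, α} : Set (Perm X)) := Subgroup.subset_closure (by simp)
  have hα : α ∈ Subgroup.closure ({σ, α} : Set (Perm X)) := Subgroup.subset_closure (by simp)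
  induction q with
  | zero => exact ⟨1, one_mem _, rfl⟩
  | succ q ih =>
    obtain ⟨g, hg, hgx⟩ := ih
    rw [iterate_succ_apply', ← hgx]
    by_cases hI : g x ∈ I
    · exact ⟨σ * α * g, mul_mem (mul_mem hσ hα) hg, by simp [backward, hI]⟩
    · exact ⟨σ * g, mul_mem hσ hg, by simp [backward, hI]⟩

theorem closure_transitive_of_backward_reaches {σ α : Perm X} {I : Set X} {r : X}
    (hr : ∀ x, ∃ q, (backward σ α I)^[q] x = r) (x y : X) :
    ∃ g ∈ Subgroup.closure ({σ, α} : Set (Perm X)), g x = y := by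
  obtain ⟨qx, hqx⟩ := hr x
  obtain ⟨qy, hqy⟩ := hr y
  obtain ⟨g, hg, hgx⟩ := exists_mem_closure_apply_eq_iterate_backward σ α I qx x
  obtain ⟨k, hk, hky⟩ := exists_mem_closure_apply_eq_iterate_backward σ α I qy y
  refine ⟨k⁻¹ * g, mul_mem (inv_mem hk) hg, ?_⟩
  rw [Perm.mul_apply, hgx, hqx, ← hqy, ← hky]
  simp

theorem exists_pos_iterate_eq_of_forall_eq_or_eq {f g : X → X} {p r : X}
    (hf : ∀ x, ∃ m, f^[m] x = p) (hg : ∀ x, g x = f x ∨ g x = r) (hp : g p = r) (x : X) :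
    ∃ q, 0 < q ∧ g^[q] x = r := by
  obtain ⟨m, hm⟩ := hf x
  induction m generalizing x with
  | zero => subst hm; exact ⟨1, one_pos, hp⟩
  | succ m ih =>
    rcases hg x with hgx | hgx
    · obtain ⟨q, hq, hqx⟩ := ih (g x) (by rwa [hgx, ← iterate_succ_apply])
      exact ⟨q + 1, q.succ_pos, by rwa [iterate_succ_apply]⟩
    · exact ⟨1, one_pos, hgx⟩

end Connectivity

section Backward

variable {X : Type*}

theorem backward_of_mem (σ α : Perm X) {I : Set X} {x : X} (hx : x ∈ I) :
    backward σ α I x = σ (α x) := by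
  simp only [backward]; exact if_pos hx

theorem backward_of_notMem (σ α : Perm X) {I : Set X} {x : X} (hx : x ∉ I) :
    backward σ α I x = σ x := by
  simp only [backward]; exact if_neg hx

theorem iterate_backward_eq_iterate_of_notMem (σ α : Perm X) {I : Set X} {k : ℕ} {z : X}
    (hz : ∀ j < k, (⇑σ)^[j] z ∉ I) : (backward σ α I)^[k] z = (⇑σ)^[k] z := by
  induction k generalizing z with
  | zero => rfl
  | succ k ih =>
    rw [iterate_succ_apply, iterate_succ_apply,
      backward_of_notMem (x := z) σ α (hz 0 k.succ_pos)]
    exact ih fun j hj => by simpa only [iterate_succ_apply] using hz (j + 1) (by omega)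

theorem exists_iterate_backward_eq [Finite X] (σ α : Perm X) {I : Set X} {z y : X}
    (hzy : σ.SameCycle z y) (hI : ∀ w, σ.SameCycle z w → w ∈ I → w = y) :
    ∃ k, (backward σ α I)^[k] z = y := by
  classical
  have hex : ∃ k, (⇑σ)^[k] z = y := by
    obtain ⟨k, hk⟩ := hzy.exists_nat_pow_eq
    exact ⟨k, by rwa [Perm.iterate_eq_pow]⟩
  refine ⟨Nat.find hex, ?_⟩
  rw [iterate_backward_eq_iterate_of_notMem σ α fun j hj hjI => ?_, Nat.find_spec hex]
  have hzj : σ.SameCycle z ((⇑σ)^[j] z) := ⟨j, by rw [zpow_natCast, Perm.iterate_eq_pow]⟩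
  exact Nat.find_min hex hj (hI _ hzj hjI)

theorem exists_iterate_apply_eq_iff {b : X → X} {p x : X} (hp : ∃ m, b^[m] (b p) = p) (k : ℕ) :
    (∃ m, b^[m] (b^[k] x) = p) ↔ ∃ m, b^[m] x = p := by
  induction k generalizing x with
  | zero => rfl
  | succ k ih =>
    rw [iterate_succ_apply, ih]
    refine ⟨fun ⟨m, hm⟩ => ⟨m + 1, hm⟩, fun ⟨m, hm⟩ => ?_⟩
    cases m with
    | zero => subst hm; exact hp
    | succ m => exact ⟨m, hm⟩

theorem backward_eq_or_eq {σ τ α : Perm X} {I : Set X} {p r : X} (hαI : ∀ x ∈ I, α x ∉ I)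
    (hσ : ∀ x ∉ I, x ≠ p → σ x = τ x) (hp : σ p = r) (x : X) :
    backward σ α I x = backward τ α I x ∨ backward σ α I x = r := by
  have hσ_or : ∀ y ∉ I, σ y = τ y ∨ σ y = r := fun y hy => by
    by_cases hyp : y = p
    · exact .inr (hyp ▸ hp)
    · exact .inl (hσ y hy hyp)
  by_cases hx : x ∈ I
  · simpa only [backward_of_mem _ _ hx] using hσ_or _ (hαI x hx)
  · simpa only [backward_of_notMem _ _ hx] using hσ_or x hx

end Backward

section PlaneTree

variable {H : Type*} {τ α : Perm H} {t : H} {I : Set H}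

/-- The set of half-edges from which the backward function reaches `τ⁻¹ t` is stable under `τ`
(on a non-root vertex everything passes through the unique ingoing half-edge) and under `α`,
hence is everything. -/
theorem exists_iterate_backward_eq_inv_root [Finite H] (hα : Involutive α)
    (htrans : ∀ x y : H, ∃ g ∈ Subgroup.closure ({τ, α} : Set (Perm H)), g x = y)
    (hαI : ∀ x ∉ I, α x ∈ I) (hroot : ∀ y ∈ I, ¬ τ.SameCycle t y)
    (hone : ∀ x, ¬ τ.SameCycle t x → ∃! y, y ∈ I ∧ τ.SameCycle x y) (h : H) :
    ∃ m, (backward τ α I)^[m] h = τ⁻¹ t := by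
  set A : Set H := {x | ∃ m, (backward τ α I)^[m] x = τ⁻¹ t}
  have hA_root : ∀ x, τ.SameCycle t x → x ∈ A := fun x hx =>
    exists_iterate_backward_eq τ α (hx.symm.trans ⟨-1, by simp⟩)
      fun w hxw hw => (hroot w hw (hx.trans hxw)).elim
  have htI : τ⁻¹ t ∉ I := fun h => hroot _ h ⟨-1, by simp⟩
  have hb_root : backward τ α I (τ⁻¹ t) = t := by
    rw [backward_of_notMem τ α htI]; simp
  have hA_iterate : ∀ k x, (backward τ α I)^[k] x ∈ A ↔ x ∈ A := fun k x =>
    exists_iterate_apply_eq_iff (p := τ⁻¹ t) (hA_root _ (by rw [hb_root])) k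
  have hA_cycle : ∀ x z, τ.SameCycle x z → (x ∈ A ↔ z ∈ A) := by
    intro x z hxz
    by_cases hx : τ.SameCycle t x
    · exact iff_of_true (hA_root x hx) (hA_root z (hx.trans hxz))
    · obtain ⟨y, ⟨-, hxy⟩, hy⟩ := hone x hx
      have hA_y : ∀ w, τ.SameCycle x w → (w ∈ A ↔ y ∈ A) := fun w hxw => by
        obtain ⟨k, hk⟩ := exists_iterate_backward_eq τ α (hxw.symm.trans hxy)
          fun v hwv hv => hy v ⟨hv, hxw.trans hwv⟩
        rw [← hk, hA_iterate]
      rw [hA_y x (.refl τ x), hA_y z hxz]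
  have hA_τ : ∀ x, τ x ∈ A ↔ x ∈ A := fun x => (hA_cycle x (τ x) ⟨1, by simp⟩).symm
  have hA_α : ∀ x ∈ A, α x ∈ A := by
    intro x hx
    rw [← hA_iterate 1]
    by_cases hαx : α x ∈ I
    · rw [iterate_one, backward_of_mem τ α hαx, hα x]
      exact (hA_τ x).2 hx
    · have hxI : x ∈ I := by_contra fun hxI => hαx (hαI x hxI)
      have hbx : backward τ α I x = backward τ α I (α x) := by
        rw [backward_of_mem τ α hxI, backward_of_notMem τ α hαx]
      rw [iterate_one, ← hbx]
      exact (hA_iterate 1 x).2 hx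
  have hA : A = Set.univ := eq_univ_of_closure_invariant htrans (a := t) (by
      rintro f (rfl | rfl) x
      exacts [hA_τ x, ⟨fun h => hα x ▸ hA_α _ h, hA_α x⟩]) (hA_root t (.refl τ t))
  show h ∈ A
  exact hA ▸ Set.mem_univ h

end PlaneTree

section Extension

variable {H : Type*} {I : Set H}

theorem alphaExt_involutive {α : Perm H} (hα : Involutive α) : Involutive (alphaExt α) := by
  rintro (a | _ | _)
  · exact congrArg Sum.inl (hα a)
  all_goals rfl

theorem alphaExt_mem_iff {α : Perm H} (hαI : ∀ x, α x ∈ I ↔ x ∉ I) (x : H ⊕ Bool) :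
    alphaExt α x ∈ (Sum.inl '' I ∪ {Sum.inr true} : Set (H ⊕ Bool)) ↔
      x ∉ (Sum.inl '' I ∪ {Sum.inr true} : Set (H ⊕ Bool)) := by
  rcases x with a | _ | _ <;> simp [alphaExt, hαI]

variable (τ : Perm H) (t : H)

theorem sigmaExt_inl_of_ne {a : H} (ha : a ≠ τ⁻¹ t) :
    sigmaExt τ t (Sum.inl a) = Sum.inl (τ a) := by
  classical
  simp only [sigmaExt, Perm.mul_apply]
  rw [swap_apply_of_ne_of_ne (by simp) (by simpa using ha)]
  rfl

theorem sigmaExt_inl_inv : sigmaExt τ t (Sum.inl (τ⁻¹ t)) = Sum.inr true := by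
  simp [sigmaExt]

theorem sigmaExt_inr_true : sigmaExt τ t (Sum.inr true) = Sum.inl t := by
  simp [sigmaExt]

theorem iterate_sigmaExt_inl {a : H} (ha : ¬ τ.SameCycle t a) (m : ℕ) :
    (⇑(sigmaExt τ t))^[m] (Sum.inl a) = Sum.inl ((⇑τ)^[m] a) := by
  induction m with
  | zero => rfl
  | succ m ih =>
    rw [iterate_succ_apply', ih, iterate_succ_apply', sigmaExt_inl_of_ne]
    intro hm
    have hta : τ.SameCycle t (τ⁻¹ t) := ⟨-1, by simp⟩
    rw [← hm, Perm.iterate_eq_pow, Perm.sameCycle_pow_right] at hta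
    exact ha hta

theorem iterate_sigmaExt_inr_true (m : ℕ) :
    (⇑(sigmaExt τ t))^[m] (Sum.inr true) = Sum.inr true ∨
      ∃ b, τ.SameCycle t b ∧ (⇑(sigmaExt τ t))^[m] (Sum.inr true) = Sum.inl b := by
  induction m with
  | zero => exact .inl rfl
  | succ m ih =>
    rw [iterate_succ_apply']
    rcases ih with hm | ⟨b, hb, hm⟩
    · exact .inr ⟨t, .refl τ t, by rw [hm, sigmaExt_inr_true]⟩
    · rw [hm]
      by_cases hbt : b = τ⁻¹ t
      · exact .inl (hbt ▸ sigmaExt_inl_inv τ t)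
      · exact .inr ⟨τ b, hb.apply_right, sigmaExt_inl_of_ne τ t hbt⟩

theorem restrictFun_sigmaExt_eq_self [Finite H] (hroot : ∀ y ∈ I, ¬ τ.SameCycle t y)
    (hI : ∀ x ∈ I, ∀ y ∈ I, τ.SameCycle x y → x = y) {y : H ⊕ Bool}
    (hy : y ∈ (Sum.inl '' I ∪ {Sum.inr true} : Set (H ⊕ Bool))) :
    restrictFun (sigmaExt τ t) (Sum.inl '' I ∪ {Sum.inr true}) y = y := by
  refine restrictFun_eq_self_of_iterate_mem hy ((sigmaExt τ t).exists_pos_iterate_mem hy)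
    fun m hm => ?_
  rcases y with a | _ | _
  · have ha : a ∈ I := by simpa using hy
    rw [iterate_sigmaExt_inl τ t (hroot a ha) m] at hm ⊢
    have hmI : (⇑τ)^[m] a ∈ I := by simpa using hm
    rw [hI _ hmI a ha ⟨-m, by simp [Perm.iterate_eq_pow]⟩]
  · simp at hy
  · rcases iterate_sigmaExt_inr_true τ t m with hm' | ⟨b, hb, hm'⟩
    · exact hm'
    · rw [hm'] at hm
      exact (hroot b (by simpa using hm) hb).elim

theorem sigmaExt_mem_range_inl {y : H ⊕ Bool} (htI : τ⁻¹ t ∉ I)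
    (hy : y ∈ (Sum.inl '' I ∪ {Sum.inr true} : Set (H ⊕ Bool))) :
    ∃ r, sigmaExt τ t y = Sum.inl r := by
  rcases y with a | _ | _
  · have ha : a ∈ I := by simpa using hy
    exact ⟨τ a, sigmaExt_inl_of_ne τ t fun h => htI (h ▸ ha)⟩
  · simp at hy
  · exact ⟨t, sigmaExt_inr_true τ t⟩

variable {p : Perm (H ⊕ Bool)} {σ : Perm H}

theorem folded_apply_eq_of_notMem
    (hσ : ∀ h, (Sum.inl (σ h) : H ⊕ Bool) =
      restrictFun ⇑(sigmaExt τ t * p) (Set.range Sum.inl) (Sum.inl h))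
    (hp : ∀ h ∉ I, p (Sum.inl h) = Sum.inl h) {h : H} (hI : h ∉ I) (ht : h ≠ τ⁻¹ t) :
    σ h = τ h := by
  have hstep : (sigmaExt τ t * p) (Sum.inl h) = Sum.inl (τ h) := by
    rw [Perm.mul_apply, hp h hI, sigmaExt_inl_of_ne τ t ht]
  apply Sum.inl_injective
  rw [hσ, restrictFun_eq_apply (Set.mem_range_self h) (by rw [hstep]; exact Set.mem_range_self _),
    hstep]

theorem folded_apply_inv_eq
    (hσ : ∀ h, (Sum.inl (σ h) : H ⊕ Bool) =
      restrictFun ⇑(sigmaExt τ t * p) (Set.range Sum.inl) (Sum.inl h))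
    (hp : ∀ h ∉ I, p (Sum.inl h) = Sum.inl h) {r : H}
    (hr : (sigmaExt τ t * p) (Sum.inr true) = Sum.inl r) (htI : τ⁻¹ t ∉ I) : σ (τ⁻¹ t) = r := by
  have hstep : (sigmaExt τ t * p) (Sum.inl (τ⁻¹ t)) = Sum.inr true := by
    rw [Perm.mul_apply, hp _ htI, sigmaExt_inl_inv]
  apply Sum.inl_injective
  rw [hσ, restrictFun_eq_apply_apply (Set.mem_range_self _) (by rw [hstep]; simp)
    (by rw [hstep, hr]; exact Set.mem_range_self r), hstep, hr]

theorem exists_pos_iterate_backward_folded_eq [Finite H] {α : Perm H} (hα : Involutive α)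
    (htrans : ∀ x y : H, ∃ g ∈ Subgroup.closure ({τ, α} : Set (Perm H)), g x = y)
    (hαI : ∀ x, α x ∈ I ↔ x ∉ I) (hroot : ∀ y ∈ I, ¬ τ.SameCycle t y)
    (hone : ∀ x, ¬ τ.SameCycle t x → ∃! y, y ∈ I ∧ τ.SameCycle x y)
    (hσ : ∀ h, (Sum.inl (σ h) : H ⊕ Bool) =
      restrictFun ⇑(sigmaExt τ t * p) (Set.range Sum.inl) (Sum.inl h))
    (hp : ∀ h ∉ I, p (Sum.inl h) = Sum.inl h) {r : H}
    (hr : (sigmaExt τ t * p) (Sum.inr true) = Sum.inl r) (h : H) :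
    ∃ q, 0 < q ∧ (backward σ α I)^[q] h = r := by
  have htI : τ⁻¹ t ∉ I := fun h => hroot _ h ⟨-1, by simp⟩
  have hσ_root := folded_apply_inv_eq τ t hσ hp hr htI
  exact exists_pos_iterate_eq_of_forall_eq_or_eq
    (exists_iterate_backward_eq_inv_root hα htrans (fun x => (hαI x).2) hroot hone)
    (backward_eq_or_eq (fun x hx h => (hαI x).1 h hx)
      (fun _ => folded_apply_eq_of_notMem τ t hσ hp) hσ_root)
    (by rw [backward_of_notMem σ α htI, hσ_root]) h

end Extension

theorem folding_inverse_of_unfolding_general {H : Type*} [Fintype H] [DecidableEq H]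
    (τ α : Equiv.Perm H)
    (hinv : ∀ h, α (α h) = h)
    (htrans : ∀ x y : H, ∃ g ∈ Subgroup.closure ({τ, α} : Set (Equiv.Perm H)), g x = y)
    (t : H) (I O : Set H)
    (hpart : I ∪ O = Set.univ) (hdisj : I ∩ O = ∅) (hIO : α '' I = O)
    (hroot : ∀ y ∈ I, ¬ τ.SameCycle t y)
    (hone : ∀ x : H, ¬ τ.SameCycle t x → ∃! y : H, y ∈ I ∧ τ.SameCycle x y)
    (π : Equiv.Perm (H ⊕ Bool))
    (hbipπ : ∀ x y : H ⊕ Bool, π.SameCycle x y →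
      (x ∈ (Sum.inl '' I ∪ {Sum.inr true} : Set (H ⊕ Bool)) ↔
       y ∈ (Sum.inl '' I ∪ {Sum.inr true} : Set (H ⊕ Bool))))
    (hcoh : ∀ h ∈ (Sum.inl '' I ∪ {Sum.inr true} : Set (H ⊕ Bool)),
      restrictFun (⇑(π * alphaExt α)⁻¹) (Sum.inl '' I ∪ {Sum.inr true}) h =
        alphaExt α (restrictFun
          (⇑(Equiv.swap (Sum.inr true : H ⊕ Bool) (Sum.inr false) * sigmaExt τ t * alphaExt α))
          (Sum.inl '' O ∪ {Sum.inr false}) (alphaExt α h)))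
    (πoI : Equiv.Perm (H ⊕ Bool))
    (hπoI : ⇑πoI = restrictFun (⇑π) (Sum.inl '' I ∪ {Sum.inr true}))
    (σ : Equiv.Perm H)
    (hσ : ∀ h : H, (Sum.inl (σ h) : H ⊕ Bool) =
      restrictFun (⇑(sigmaExt τ t * πoI))
        (Set.range (Sum.inl : H → H ⊕ Bool)) (Sum.inl h)) :
    ((∃ r : H, (sigmaExt τ t * πoI) (Sum.inr true) = Sum.inl r) ∧
      ∀ x y : H, ∃ g ∈ Subgroup.closure ({σ, α} : Set (Equiv.Perm H)), g x = y) ∧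
    (∀ r : H, (sigmaExt τ t * πoI) (Sum.inr true) = Sum.inl r →
      ∀ h : H, ∃ q : ℕ, 0 < q ∧ (backward σ α I)^[q] h = r) ∧
    ((∀ x : H ⊕ Bool,
        restrictFun (⇑π) (Sum.inl '' I ∪ {Sum.inr true}) x =
          restrictFun (⇑(sigmaExt τ t * πoI)) (Sum.inl '' I ∪ {Sum.inr true}) x) ∧
      (∀ x : H ⊕ Bool,
        restrictFun (⇑π⁻¹) (Sum.inl '' O ∪ {Sum.inr false}) x =
          restrictFun
            (⇑(Equiv.swap (Sum.inr true : H ⊕ Bool) (Sum.inr false) *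
                (sigmaExt τ t * πoI) * alphaExt α))
            (Sum.inl '' O ∪ {Sum.inr false}) x)) := by
  obtain rfl : O = Iᶜ := (compl_unique hdisj hpart).symm
  have hαI : ∀ x, α x ∈ I ↔ x ∉ I := fun x => by
    rw [← Set.mem_compl_iff, ← hIO, Involutive.image_eq_preimage_symm hinv, Set.mem_preimage]
  have hπI' : ∀ x, π x ∈ (Sum.inl '' I ∪ {Sum.inr true} : Set (H ⊕ Bool)) ↔
      x ∈ (Sum.inl '' I ∪ {Sum.inr true} : Set (H ⊕ Bool)) :=
    fun x => (hbipπ x (π x) ⟨1, rfl⟩).symm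
  have hp : ∀ h ∉ I, πoI (Sum.inl h) = Sum.inl h := fun h hh => by
    rw [hπoI, restrictFun_of_notMem (by simpa using hh)]
  have huniq : ∀ x ∈ I, ∀ y ∈ I, τ.SameCycle x y → x = y := fun x hx y hy hxy =>
    (hone x (hroot x hx)).unique ⟨hx, .refl τ x⟩ ⟨hy, hxy⟩
  have hi : (Sum.inr true : H ⊕ Bool) ∈ (Sum.inl '' I ∪ {Sum.inr true} : Set (H ⊕ Bool)) := by simp
  obtain ⟨r, hr⟩ : ∃ r, (sigmaExt τ t * πoI) (Sum.inr true) = Sum.inl r := by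
    rw [Perm.mul_apply, hπoI, restrictFun_eq_apply hi ((hπI' _).2 hi)]
    exact sigmaExt_mem_range_inl τ t (fun h => hroot _ h ⟨-1, by simp⟩) ((hπI' _).2 hi)
  have hreach : ∀ r, (sigmaExt τ t * πoI) (Sum.inr true) = Sum.inl r →
      ∀ h, ∃ q, 0 < q ∧ (backward σ α I)^[q] h = r := fun r hr =>
    exists_pos_iterate_backward_folded_eq τ t hinv htrans hαI hroot hone hσ hp hr
  have hO' : (Sum.inl '' Iᶜ ∪ {Sum.inr false} : Set (H ⊕ Bool)) =
      (Sum.inl '' I ∪ {Sum.inr true})ᶜ := by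
    ext (a | _ | _) <;> simp
  refine ⟨⟨⟨r, hr⟩, closure_transitive_of_backward_reaches fun h =>
    (hreach r hr h).imp fun _ => And.right⟩, hreach,
    restrictFun_eq_restrictFun_mul _ (fun _ => restrictFun_sigmaExt_eq_self τ t hroot huniq)
      (fun x => (hπI' x).2) hπoI, ?_⟩
  rw [hO'] at hcoh ⊢
  exact restrictFun_inv_compl_eq _ _ (alphaExt_involutive hinv) (alphaExt_mem_iff hαI) hπI'
    hπoI hcoh

/-- folding step: given a plane tree `(τ,α)` rooted at `t` with
root-to-leaves orientation `(I,O)` and a mobile `π` coherently attached to it, the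
permutation `σ = (τ'∘π_{|I'})_{|H}` together with `α` is a combinatorial map, the
orientation `(I,O)` is left-connected for it (rooted at `r = σ'(i)`), and the unfolding
of `((σ,α),(I,O))` returns the given tree and mobile
(`π_{|I'} = σ'_{|I'}` and `π⁻¹_{|O'} = ((i,o)∘σ'∘α')_{|O'}`). -/
theorem folding_inverse_of_unfolding {H : Type*} [Fintype H] [DecidableEq H]
    (n : ℕ) (hn : 1 ≤ n) (hcard : Fintype.card H = 2 * n)
    (τ α : Equiv.Perm H)
    (hfpf : ∀ h, α h ≠ h) (hinv : ∀ h, α (α h) = h)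
    (htrans : ∀ x y : H, ∃ g ∈ Subgroup.closure ({τ, α} : Set (Equiv.Perm H)), g x = y)
    (horb : numOrbitsOn (⇑τ) Set.univ = n + 1)
    (t : H) (I O : Set H)
    (hpart : I ∪ O = Set.univ) (hdisj : I ∩ O = ∅) (hIO : α '' I = O) (ht : t ∈ O)
    (hroot : ∀ y ∈ I, ¬ τ.SameCycle t y)
    (hone : ∀ x : H, ¬ τ.SameCycle t x → ∃! y : H, y ∈ I ∧ τ.SameCycle x y)
    (π : Equiv.Perm (H ⊕ Bool))
    (htransπ : ∀ x y : H ⊕ Bool,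
      ∃ g ∈ Subgroup.closure ({π, alphaExt α} : Set (Equiv.Perm (H ⊕ Bool))), g x = y)
    (hcyc : ∀ x y : H ⊕ Bool, ∃ k : ℕ, ((π * alphaExt α) ^ k) x = y)
    (hbipπ : ∀ x y : H ⊕ Bool, π.SameCycle x y →
      (x ∈ (Sum.inl '' I ∪ {Sum.inr true} : Set (H ⊕ Bool)) ↔
       y ∈ (Sum.inl '' I ∪ {Sum.inr true} : Set (H ⊕ Bool))))
    (hcoh : ∀ h ∈ (Sum.inl '' I ∪ {Sum.inr true} : Set (H ⊕ Bool)),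
      restrictFun (⇑(π * alphaExt α)⁻¹) (Sum.inl '' I ∪ {Sum.inr true}) h =
        alphaExt α (restrictFun
          (⇑(Equiv.swap (Sum.inr true : H ⊕ Bool) (Sum.inr false) * sigmaExt τ t * alphaExt α))
          (Sum.inl '' O ∪ {Sum.inr false}) (alphaExt α h)))
    (πoI : Equiv.Perm (H ⊕ Bool))
    (hπoI : ⇑πoI = restrictFun (⇑π) (Sum.inl '' I ∪ {Sum.inr true}))
    (σ : Equiv.Perm H)
    (hσ : ∀ h : H, (Sum.inl (σ h) : H ⊕ Bool) =
      restrictFun (⇑(sigmaExt τ t * πoI))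
        (Set.range (Sum.inl : H → H ⊕ Bool)) (Sum.inl h)) :
    ((∃ r : H, (sigmaExt τ t * πoI) (Sum.inr true) = Sum.inl r) ∧
      ∀ x y : H, ∃ g ∈ Subgroup.closure ({σ, α} : Set (Equiv.Perm H)), g x = y) ∧
    (∀ r : H, (sigmaExt τ t * πoI) (Sum.inr true) = Sum.inl r →
      ∀ h : H, ∃ q : ℕ, 0 < q ∧ (backward σ α I)^[q] h = r) ∧
    ((∀ x : H ⊕ Bool,
        restrictFun (⇑π) (Sum.inl '' I ∪ {Sum.inr true}) x =
          restrictFun (⇑(sigmaExt τ t * πoI)) (Sum.inl '' I ∪ {Sum.inr true}) x) ∧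
      (∀ x : H ⊕ Bool,
        restrictFun (⇑π⁻¹) (Sum.inl '' O ∪ {Sum.inr false}) x =
          restrictFun
            (⇑(Equiv.swap (Sum.inr true : H ⊕ Bool) (Sum.inr false) *
                (sigmaExt τ t * πoI) * alphaExt α))
            (Sum.inl '' O ∪ {Sum.inr false}) x)) :=
  folding_inverse_of_unfolding_general τ α hinv htrans t I O hpart hdisj hIO hroot hone π hbipπ hcoh
    πoI hπoI σ hσ
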